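/- arXiv:1810.02872 — 2 statements merged into one kernel-verified Lean document; each statement's English description precedes it below -/
import Mathlib

section
/- Let H be a weak Hopf algebra with H = H_s. Then every left partial H-module coalgebra is a left H-module coalgebra (via the same action map). -/
open TensorProduct Coalgebra

noncomputable section

variable (k : Type*) [Field k]

section WeakHopfDefs

variable (H : Type*) [Ring H] [Algebra k H] [Coalgebra k H]

/-- The target map `ε_t(h) = ε(1₁ h) 1₂` of a weak bialgebra. -/
def wεt (h : H) : H :=
  (TensorProduct.lid k H)
    ((TensorProduct.map (counit (R := k) ∘ₗ LinearMap.mulRight k h) (LinearMap.id))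
      (comul (R := k) (1 : H)))

/-- The source map `ε_s(h) = 1₁ ε(h 1₂)` of a weak bialgebra. -/
def wεs (h : H) : H :=
  (TensorProduct.rid k H)
    ((TensorProduct.map (LinearMap.id) (counit (R := k) ∘ₗ LinearMap.mulLeft k h))
      (comul (R := k) (1 : H)))

/-- A weak Hopf algebra structure on an algebra `H` which is also a coalgebra:
the weak bialgebra axioms together with an antipode `S`. -/
structure WeakHopf : Type _ where
  /-- Δ is multiplicative -/
  comul_mul : ∀ h g : H, comul (R := k) (h * g) = comul (R := k) h * comul (R := k) g
  /-- ε(hgl) = Σ ε(h g₁) ε(g₂ l) -/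
  counit_weak_mul : ∀ h g l : H, counit (R := k) (h * g * l)
      = LinearMap.mul' k k
          ((TensorProduct.map (counit (R := k) ∘ₗ LinearMap.mulLeft k h)
              (counit (R := k) ∘ₗ LinearMap.mulRight k l)) (comul (R := k) g))
  /-- ε(hgl) = Σ ε(h g₂) ε(g₁ l) -/
  counit_weak_mul' : ∀ h g l : H, counit (R := k) (h * g * l)
      = LinearMap.mul' k k
          ((TensorProduct.map (counit (R := k) ∘ₗ LinearMap.mulLeft k h)
              (counit (R := k) ∘ₗ LinearMap.mulRight k l))
            ((TensorProduct.comm k H H) (comul (R := k) g)))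
  /-- (1 ⊗ Δ(1))(Δ(1) ⊗ 1) = Δ²(1) -/
  comul_one_left :
      ((1 : H) ⊗ₜ[k] comul (R := k) (1 : H))
          * ((TensorProduct.assoc k H H H) (comul (R := k) (1 : H) ⊗ₜ[k] (1 : H)))
        = (LinearMap.lTensor H (comul (R := k))) (comul (R := k) (1 : H))
  /-- (Δ(1) ⊗ 1)(1 ⊗ Δ(1)) = Δ²(1) -/
  comul_one_right :
      ((TensorProduct.assoc k H H H) (comul (R := k) (1 : H) ⊗ₜ[k] (1 : H)))
          * ((1 : H) ⊗ₜ[k] comul (R := k) (1 : H))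
        = (LinearMap.lTensor H (comul (R := k))) (comul (R := k) (1 : H))
  /-- the antipode -/
  S : H →ₗ[k] H
  /-- Σ h₁ S(h₂) = ε_t(h) -/
  antipode_t : ∀ h : H,
      LinearMap.mul' k H ((LinearMap.lTensor H S) (comul (R := k) h)) = wεt k H h
  /-- Σ S(h₁) h₂ = ε_s(h) -/
  antipode_s : ∀ h : H,
      LinearMap.mul' k H ((LinearMap.rTensor H S) (comul (R := k) h)) = wεs k H h
  /-- Σ S(h₁) h₂ S(h₃) = S(h) -/
  antipode_mid : ∀ h : H,
      LinearMap.mul' k H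
        ((TensorProduct.map S (LinearMap.mul' k H ∘ₗ LinearMap.lTensor H S))
          ((LinearMap.lTensor H (comul (R := k))) (comul (R := k) h))) = S h

end WeakHopfDefs

section Actions

variable (H : Type*) [Ring H] [Algebra k H] [Coalgebra k H]
variable (C : Type*) [AddCommGroup C] [Module k C] [Coalgebra k C]

/-- The Sweedler sum `Σ (h g₁ · c₁) ε(g₂ · c₂)` appearing in (PMC3). -/
def pmc3RHS (act : H →ₗ[k] C →ₗ[k] C) (h g : H) (c : C) : C :=
  (TensorProduct.rid k C)
    ((TensorProduct.map
        ((TensorProduct.lift act) ∘ₗ (LinearMap.rTensor C (LinearMap.mulLeft k h)))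
        (counit (R := k) ∘ₗ (TensorProduct.lift act)))
      ((TensorProduct.tensorTensorTensorComm k H H C C)
        (comul (R := k) g ⊗ₜ[k] comul (R := k) c)))

/-- The Sweedler sum `Σ ε(g₁ · c₁) (h g₂ · c₂)` appearing in the symmetry condition. -/
def pmc3symRHS (act : H →ₗ[k] C →ₗ[k] C) (h g : H) (c : C) : C :=
  (TensorProduct.lid k C)
    ((TensorProduct.map
        (counit (R := k) ∘ₗ (TensorProduct.lift act))
        ((TensorProduct.lift act) ∘ₗ (LinearMap.rTensor C (LinearMap.mulLeft k h))))
      ((TensorProduct.tensorTensorTensorComm k H H C C)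
        (comul (R := k) g ⊗ₜ[k] comul (R := k) c)))

/-- (MC2)/(PMC2): `Δ(h·c) = (h₁·c₁) ⊗ (h₂·c₂)`. -/
def SweedlerComulCompat (act : H →ₗ[k] C →ₗ[k] C) : Prop :=
  ∀ (h : H) (c : C),
    comul (R := k) (act h c)
      = (TensorProduct.map (TensorProduct.lift act) (TensorProduct.lift act))
          ((TensorProduct.tensorTensorTensorComm k H H C C)
            (comul (R := k) h ⊗ₜ[k] comul (R := k) c))

/-- `C` is a left partial `H`-module coalgebra via `act` (`act h c = h · c`). -/
structure IsPartialModuleCoalgebra (act : H →ₗ[k] C →ₗ[k] C) : Prop where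
  pmc1 : ∀ c : C, act 1 c = c
  pmc2 : SweedlerComulCompat k H C act
  pmc3 : ∀ (h g : H) (c : C), act h (act g c) = pmc3RHS k H C act h g c

/-- `C` is a symmetric left partial `H`-module coalgebra via `act`. -/
structure IsSymmetricPartialModuleCoalgebra (act : H →ₗ[k] C →ₗ[k] C)
    extends IsPartialModuleCoalgebra k H C act : Prop where
  pmc3sym : ∀ (h g : H) (c : C), act h (act g c) = pmc3symRHS k H C act h g c

/-- `C` is a left `H`-module coalgebra via `act`. -/
structure IsModuleCoalgebra (act : H →ₗ[k] C →ₗ[k] C) : Prop where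
  mc1 : ∀ c : C, act 1 c = c
  mc2 : SweedlerComulCompat k H C act
  mc3 : ∀ (h g : H) (c : C), act h (act g c) = act (h * g) c
  mc4 : ∀ (h : H) (c : C), counit (R := k) (act h c) = counit (R := k) (act (wεs k H h) c)

end Actions

end

/-! If `ε_s` is onto it is the identity, being idempotent. Then so is `ε'_t(h) = ε(h 1₁) 1₂`,
because `ε_s ∘ ε'_t = ε_s`. In any weak bialgebra the elements `x = ε'_t(h)` satisfy
`Δ(x) = (x ⊗ 1) Δ(1)`; hence here `(h ⊗ 1) Δ(g) = Δ(h) Δ(g) = Δ(hg)` for all `h, g`, and the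
right-hand side `(h g₁ · c₁) ε(g₂ · c₂)` of (PMC3) collapses, by (PMC2) and counitality, to
`hg · c`. -/

section

variable {k : Type*} [Field k] {H : Type*} [Ring H] [Algebra k H]

theorem rTensor_mulLeft_eq_tmul_one_mul (h : H) (X : H ⊗[k] H) :
    LinearMap.rTensor H (LinearMap.mulLeft k h) X = (h ⊗ₜ[k] (1 : H)) * X := by
  induction X using TensorProduct.induction_on with
  | zero => simp
  | tmul u v => simp [Algebra.TensorProduct.tmul_mul_tmul]
  | add x y hx hy => rw [map_add, mul_add, hx, hy]

variable [Coalgebra k H]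

variable (k H) in
/-- `ε'_t(h) = ε(h 1₁) 1₂`, the target map of `Hᵐᵒᵖ`. -/
def wεt' (h : H) : H :=
  (TensorProduct.lid k H)
    ((TensorProduct.map (counit (R := k) ∘ₗ LinearMap.mulLeft k h) LinearMap.id)
      (comul (R := k) (1 : H)))

theorem wεs_congr {a b : H}
    (hab : ∀ y : H, counit (R := k) (a * y) = counit (R := k) (b * y)) :
    wεs k H a = wεs k H b := by
  have : counit (R := k) ∘ₗ LinearMap.mulLeft k a = counit ∘ₗ LinearMap.mulLeft k b :=
    LinearMap.ext hab
  rw [wεs, wεs, this]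

namespace WeakHopf

theorem counit_wεs_mul (wh : WeakHopf k H) (h y : H) :
    counit (R := k) (wεs k H h * y) = counit (R := k) (h * y) := by
  obtain ⟨s, hs⟩ := TensorProduct.exists_finset (comul (R := k) (1 : H))
  simpa [wεs, hs, Finset.sum_mul] using (wh.counit_weak_mul' h 1 y).symm

theorem counit_wεt'_mul (wh : WeakHopf k H) (h y : H) :
    counit (R := k) (wεt' k H h * y) = counit (R := k) (h * y) := by
  obtain ⟨s, hs⟩ := TensorProduct.exists_finset (comul (R := k) (1 : H))
  simpa [wεt', hs, Finset.sum_mul] using (wh.counit_weak_mul h 1 y).symm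

theorem wεs_wεs (wh : WeakHopf k H) (h : H) : wεs k H (wεs k H h) = wεs k H h :=
  wεs_congr (wh.counit_wεs_mul h)

theorem wεs_wεt' (wh : WeakHopf k H) (h : H) : wεs k H (wεt' k H h) = wεs k H h :=
  wεs_congr (wh.counit_wεt'_mul h)

theorem comul_wεt' (wh : WeakHopf k H) (h : H) :
    comul (R := k) (wεt' k H h) = (wεt' k H h ⊗ₜ[k] 1) * comul (R := k) (1 : H) := by
  obtain ⟨s, hs⟩ := TensorProduct.exists_finset (comul (R := k) (1 : H))
  have key := congrArg ((TensorProduct.lid k (H ⊗[k] H)).toLinearMap ∘ₗ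
    LinearMap.rTensor _ (counit (R := k) ∘ₗ LinearMap.mulLeft k h)) wh.comul_one_right
  rw [hs] at key
  simp only [sum_tmul, map_sum, TensorProduct.assoc_tmul, Finset.sum_mul,
    Algebra.TensorProduct.tmul_mul_tmul, mul_one, Finset.mul_sum, one_mul, LinearMap.coe_comp,
    LinearEquiv.coe_coe, Function.comp_apply, LinearMap.rTensor_tmul, LinearMap.mulLeft_apply,
    TensorProduct.lid_tmul, LinearMap.lTensor_tmul, wεt', hs, TensorProduct.map_tmul,
    LinearMap.id_coe, id_eq, map_smul, Algebra.smul_mul_assoc] at key ⊢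
  rw [← key, Finset.sum_comm]
  simp only [Finset.smul_sum, TensorProduct.smul_tmul']

theorem wεs_eq_self (wh : WeakHopf k H) (hsurj : Function.Surjective (wεs k H)) (h : H) :
    wεs k H h = h := by
  obtain ⟨g, rfl⟩ := hsurj h
  exact wh.wεs_wεs g

theorem comul_eq_tmul_one_mul (wh : WeakHopf k H) (hid : ∀ h : H, wεs k H h = h) (h : H) :
    comul (R := k) h = (h ⊗ₜ[k] 1) * comul (R := k) (1 : H) := by
  have hh : wεt' k H h = h := by rw [← hid (wεt' k H h), wh.wεs_wεt', hid]
  rw [← hh, wh.comul_wεt']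

theorem tmul_one_mul_comul (wh : WeakHopf k H) (hid : ∀ h : H, wεs k H h = h) (h g : H) :
    (h ⊗ₜ[k] 1) * comul (R := k) g = comul (R := k) (h * g) :=
  calc (h ⊗ₜ[k] 1) * comul (R := k) g
      = (h ⊗ₜ[k] 1) * comul (R := k) (1 : H) * comul (R := k) g := by
        rw [mul_assoc, ← wh.comul_mul, one_mul]
    _ = comul (R := k) (h * g) := by rw [← wh.comul_eq_tmul_one_mul hid, wh.comul_mul]

end WeakHopf

theorem SweedlerComulCompat.pmc3RHS_eq_act_mul {C : Type*} [AddCommGroup C] [Module k C]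
    [Coalgebra k C] {act : H →ₗ[k] C →ₗ[k] C} (hact : SweedlerComulCompat k H C act) {h g : H}
    (hhg : (h ⊗ₜ[k] 1) * comul (R := k) g = comul (R := k) (h * g)) (c : C) :
    pmc3RHS k H C act h g c = act (h * g) c := by
  have hcomm :
      TensorProduct.map (lift act ∘ₗ LinearMap.rTensor C (LinearMap.mulLeft k h))
          (counit ∘ₗ lift act) ∘ₗ (tensorTensorTensorComm k H H C C).toLinearMap
        = LinearMap.lTensor C counit ∘ₗ TensorProduct.map (lift act) (lift act) ∘ₗ
          (tensorTensorTensorComm k H H C C).toLinearMap ∘ₗ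
            LinearMap.rTensor _ (LinearMap.rTensor H (LinearMap.mulLeft k h)) :=
    TensorProduct.ext_fourfold' fun _ _ _ _ => by simp
  have key := LinearMap.congr_fun hcomm (comul g ⊗ₜ comul c)
  simp only [LinearMap.comp_apply, LinearMap.rTensor_tmul, LinearEquiv.coe_coe,
    rTensor_mulLeft_eq_tmul_one_mul, hhg, ← hact (h * g) c] at key
  rw [pmc3RHS, key, Coalgebra.lTensor_counit_comul, TensorProduct.rid_tmul, one_smul]

end

/-- If `H = H_s`, then every left partial `H`-module coalgebra is a left
`H`-module coalgebra via the same action map. -/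
theorem partial_is_global_of_source_eq_top
    (k : Type*) [Field k] (H : Type*) [Ring H] [Algebra k H] [Coalgebra k H]
    (wh : WeakHopf k H) (hHs : ∀ h : H, h ∈ Set.range (wεs k H))
    (C : Type*) [AddCommGroup C] [Module k C] [Coalgebra k C]
    (act : H →ₗ[k] C →ₗ[k] C)
    (hp : IsPartialModuleCoalgebra k H C act) :
    IsModuleCoalgebra k H C act := by
  have hid : ∀ h : H, wεs k H h = h := wh.wεs_eq_self hHs
  refine ⟨hp.pmc1, hp.pmc2, fun h g c => ?_, fun h c => by rw [hid h]⟩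
  rw [hp.pmc3, hp.pmc2.pmc3RHS_eq_act_mul (wh.tmul_one_mul_comul hid h g)]
end

section
/- Let H be a weak Hopf algebra, C a nonzero coalgebra, and λ : H → k a linear map such that h·c := λ(h)c makes C a left partial H-module coalgebra. Then λ(h) = λ(ε_s(h)) for all h ∈ H if and only if C is a left H-module coalgebra via h⊳c = λ(h)c. -/
open TensorProduct Coalgebra

/-! Evaluating the scalar partial action at an element `c` with `ε(c) = 1` (which exists since
`C ≠ 0`) turns (PMC1) and (PMC3) into `λ(1) = 1` and `λ(h)λ(g) = Σ λ(hg₁)λ(g₂)`; in particular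
`λ` is idempotent for the convolution product. If `λ = λ ∘ ε_s`, the weak counit axiom
`ε(hg1₂) = Σ ε(hg₁)ε(g₂1₂)` gives `λ(h·) = ε(h·) * λ`, hence
`λ(h·) = ε(h·) * λ * λ = λ(h·) * λ`, which is `λ(hg) = λ(h)λ(g)`, i.e. (MC3); (MC4) is source
invariance itself. Conversely, (MC4) at such a `c` reads `λ(h) = λ(ε_s(h))`. -/

open WithConv

theorem Coalgebra.exists_counit_eq_one {k C : Type*} [Field k] [AddCommGroup C] [Module k C]
    [Coalgebra k C] [Nontrivial C] : ∃ c : C, counit (R := k) c = 1 := by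
  obtain ⟨c, hc⟩ := exists_ne (0 : C)
  have hε : (counit : C →ₗ[k] k) ≠ 0 := fun h0 =>
    hc (by simpa [h0] using (sum_counit_smul (ℛ k c)).symm)
  obtain ⟨d, hd⟩ := DFunLike.ne_iff.mp hε
  exact ⟨(counit (R := k) d)⁻¹ • d, by simp_all⟩

section

variable {k H C ι : Type*} [Field k] [Ring H] [Algebra k H] [Coalgebra k H]
  [AddCommGroup C] [Module k C] [Coalgebra k C]

theorem wεs_eq_sum (ρ : Coalgebra.Repr k (1 : H) ι) (x : H) :
    wεs k H x = ∑ i ∈ ρ.index, counit (R := k) (x * ρ.right i) • ρ.left i := by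
  simp [wεs, ← ρ.eq, map_sum]

theorem WeakHopf.counit_mul_mul_eq_sum (wh : WeakHopf k H) {g : H} (ρ : Coalgebra.Repr k g ι)
    (h l : H) :
    counit (R := k) (h * g * l)
      = ∑ i ∈ ρ.index, counit (R := k) (h * ρ.left i) * counit (R := k) (ρ.right i * l) := by
  simp [wh.counit_weak_mul, ← ρ.eq, map_sum]

theorem pmc3RHS_lsmul_comp (lam : H →ₗ[k] k) (h g : H) (c : C) :
    pmc3RHS k H C (LinearMap.lsmul k C ∘ₗ lam) h g c
      = (toConv (lam ∘ₗ LinearMap.mulLeft k h) * toConv lam) g • c := by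
  have hc : ∑ i ∈ (ℛ k c).index, counit (R := k) ((ℛ k c).right i) • (ℛ k c).left i = c := by
    simpa only [map_sum, rid_tmul, one_smul] using
      congr(TensorProduct.rid k C $(sum_tmul_counit_eq (R := k) (ℛ k c)))
  conv_rhs => rw [← hc]
  simp only [pmc3RHS, ← (ℛ k g).eq, ← (ℛ k c).eq, (ℛ k g).convMul_apply, map_sum, sum_tmul,
    tmul_sum, tensorTensorTensorComm_tmul, map_tmul, LinearMap.comp_apply, LinearMap.rTensor_tmul,
    LinearMap.mulLeft_apply, lift.tmul, LinearMap.lsmul_apply, map_smul, rid_tmul, smul_eq_mul,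
    Finset.smul_sum, smul_smul]
  simp only [Finset.sum_mul, Finset.sum_smul]
  refine Finset.sum_congr rfl fun _ _ => Finset.sum_congr rfl fun _ _ => ?_
  congr 1
  ring

theorem WeakHopf.toConv_comp_mulLeft_of_source_invariant (wh : WeakHopf k H)
    {lam : H →ₗ[k] k} (hl : ∀ x : H, lam x = lam (wεs k H x)) (h : H) :
    toConv (lam ∘ₗ LinearMap.mulLeft k h)
      = toConv (counit ∘ₗ LinearMap.mulLeft k h) * toConv lam := by
  ext g
  let ρ := ℛ k (1 : H)
  let σ := ℛ k g
  calc lam (h * g)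
      = ∑ i ∈ ρ.index, counit (R := k) (h * g * ρ.right i) * lam (ρ.left i) := by
        simp [hl (h * g), wεs_eq_sum ρ]
    _ = ∑ j ∈ σ.index, counit (R := k) (h * σ.left j)
          * ∑ i ∈ ρ.index, counit (R := k) (σ.right j * ρ.right i) * lam (ρ.left i) := by
        simp only [wh.counit_mul_mul_eq_sum σ, Finset.sum_mul, Finset.mul_sum]
        rw [Finset.sum_comm]
        refine Finset.sum_congr rfl fun _ _ => Finset.sum_congr rfl fun _ _ => ?_
        ring
    _ = ∑ j ∈ σ.index, counit (R := k) (h * σ.left j) * lam (σ.right j) := by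
        simp [hl (σ.right _), wεs_eq_sum ρ]
    _ = _ := (σ.convMul_apply (toConv (counit ∘ₗ LinearMap.mulLeft k h)) (toConv lam)).symm

namespace IsPartialModuleCoalgebra

variable [Nontrivial C] {lam : H →ₗ[k] k}

theorem lsmul_map_one (hp : IsPartialModuleCoalgebra k H C (LinearMap.lsmul k C ∘ₗ lam)) :
    lam 1 = 1 := by
  obtain ⟨c, hc⟩ := exists_ne (0 : C)
  exact smul_left_injective k hc (by simpa using hp.pmc1 c)

theorem lsmul_mul_eq_conv (hp : IsPartialModuleCoalgebra k H C (LinearMap.lsmul k C ∘ₗ lam))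
    (h g : H) : lam h * lam g = (toConv (lam ∘ₗ LinearMap.mulLeft k h) * toConv lam) g := by
  obtain ⟨c, hc⟩ := exists_ne (0 : C)
  refine smul_left_injective k hc ?_
  simpa [smul_smul, mul_comm, pmc3RHS_lsmul_comp] using hp.pmc3 h g c

theorem lsmul_conv_self (hp : IsPartialModuleCoalgebra k H C (LinearMap.lsmul k C ∘ₗ lam)) :
    toConv lam * toConv lam = toConv lam := by
  ext g
  simpa [hp.lsmul_map_one] using (hp.lsmul_mul_eq_conv 1 g).symm

theorem lsmul_map_mul (hp : IsPartialModuleCoalgebra k H C (LinearMap.lsmul k C ∘ₗ lam))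
    (wh : WeakHopf k H) (hl : ∀ x : H, lam x = lam (wεs k H x)) (h g : H) :
    lam (h * g) = lam h * lam g := by
  have hright : toConv (lam ∘ₗ LinearMap.mulLeft k h) * toConv lam
      = toConv (lam ∘ₗ LinearMap.mulLeft k h) := by
    rw [wh.toConv_comp_mulLeft_of_source_invariant hl h, mul_assoc, hp.lsmul_conv_self]
  calc lam (h * g) = (toConv (lam ∘ₗ LinearMap.mulLeft k h) * toConv lam) g := by rw [hright]; rfl
    _ = lam h * lam g := (hp.lsmul_mul_eq_conv h g).symm

end IsPartialModuleCoalgebra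

end

/-- If `λ` defines a partial action of `H` on a nonzero coalgebra `C` by
`h · c = λ(h) • c`, then `λ(h) = λ(ε_s(h))` for all `h` iff `C` is a (global) left
`H`-module coalgebra via the same map. -/
theorem lambda_source_invariant_iff_global
    (k : Type*) [Field k] (H : Type*) [Ring H] [Algebra k H] [Coalgebra k H]
    (C : Type*) [AddCommGroup C] [Module k C] [Coalgebra k C] [Nontrivial C]
    (wh : WeakHopf k H) (lam : H →ₗ[k] k)
    (hp : IsPartialModuleCoalgebra k H C ((LinearMap.lsmul k C) ∘ₗ lam)) :
    (∀ h : H, lam h = lam (wεs k H h)) ↔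
      IsModuleCoalgebra k H C ((LinearMap.lsmul k C) ∘ₗ lam) := by
  constructor
  · intro hl
    refine ⟨hp.pmc1, hp.pmc2, fun h g c => ?_, fun h c => ?_⟩
    · simp [smul_smul, hp.lsmul_map_mul wh hl, mul_comm]
    · simp [← hl h]
  · intro hm h
    obtain ⟨c, hc⟩ := Coalgebra.exists_counit_eq_one (k := k) (C := C)
    simpa [hc] using hm.mc4 h c
end
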